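/- arXiv:math/0604500 — 2 statements merged into one kernel-verified Lean document; each statement's English description precedes it below -/
import Mathlib

section
/- The wrapping map for the circle is a convolution homomorphism: for all Schwartz functions f, g : ℝ → ℂ and all x ∈ ℝ, the periodization of the Euclidean convolution equals the circle convolution of the periodizations, i.e. Σ_{n∈ℤ} (f *_ℝ g)(x + n) = ∫_0^1 (Φf)(x − y) (Φg)(y) dy, where (Φf)(x) = Σ_{n∈ℤ} f(x + n). -/
/-!
Cutting ℝ into unit intervals, `∫_ℝ h = Σ_m ∫_0^1 h(y + m)`, turns `Σ_n (f * g)(x + n)` into the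
double series `Σ_{n,m} ∫_0^1 f(x + n - y - m) g(y + m) dy`. After the substitution `k = n - m` this
is the integral over `[0, 1]` of the Cauchy product `Σ_{k,m} f(x - y + k) g(y + m)`, which is
`Φf(x - y) Φg(y)`. Rapid decay makes the sup norms of the integer translates of `f` and `g` on any
compact set summable, and this justifies every interchange of sums and integrals.
-/

open Real MeasureTheory

/-- The wrapping (periodization) map `Φf(x) = Σ_{n∈ℤ} f(x + n)` from functions on `ℝ`
to `1`-periodic functions (functions on the circle `ℝ/ℤ`). -/
noncomputable def wrap (f : ℝ → ℂ) (x : ℝ) : ℂ := ∑' n : ℤ, f (x + n)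

open Set TopologicalSpace ContinuousMap

theorem ContinuousMap.norm_restrict_comp_le {X Y E : Type*} [TopologicalSpace X]
    [TopologicalSpace Y] [NormedAddCommGroup E] (h : C(Y, E)) (φ : C(X, Y)) (K : Compacts X) :
    ‖(h.comp φ).restrict K‖ ≤ ‖h.restrict (K.map φ φ.continuous)‖ :=
  (norm_le _ (norm_nonneg _)).mpr fun y =>
    norm_coe_le_norm (h.restrict (K.map φ φ.continuous)) ⟨φ y, mem_image_of_mem φ y.2⟩

theorem summable_norm_apply_of_summable_norm_restrict {ι X E : Type*} [TopologicalSpace X]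
    [NormedAddCommGroup E] {F : ι → C(X, E)} {K : Compacts X}
    (hF : Summable fun i => ‖(F i).restrict K‖) {y : X} (hy : y ∈ K) :
    Summable fun i => ‖F i y‖ :=
  hF.of_nonneg_of_le (fun _ => norm_nonneg _) fun i =>
    show ‖(F i).restrict K ⟨y, hy⟩‖ ≤ _ from norm_coe_le_norm _ _

theorem norm_apply_le_tsum_norm_restrict_Icc {E : Type*} [NormedAddCommGroup E] {f : C(ℝ, E)}
    (hf : Summable fun n : ℤ => ‖(f.comp (ContinuousMap.addRight n)).restrict (Icc 0 1)‖) (t : ℝ) :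
    ‖f t‖ ≤ ∑' n : ℤ, ‖(f.comp (ContinuousMap.addRight n)).restrict (Icc 0 1)‖ := by
  have ht : Int.fract t ∈ Icc (0 : ℝ) 1 := ⟨Int.fract_nonneg t, (Int.fract_lt_one t).le⟩
  calc ‖f t‖ = ‖(f.comp (ContinuousMap.addRight ⌊t⌋)).restrict (Icc 0 1) ⟨Int.fract t, ht⟩‖ := by
        simp [Int.fract_add_floor]
    _ ≤ ‖(f.comp (ContinuousMap.addRight ⌊t⌋)).restrict (Icc 0 1)‖ := norm_coe_le_norm _ _
    _ ≤ _ := hf.le_tsum _ fun _ _ => norm_nonneg _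

theorem summable_norm_restrict_comp_addRight_comp {X E : Type*} [TopologicalSpace X]
    [NormedAddCommGroup E] {f : C(ℝ, E)}
    (hf : ∀ K : Compacts ℝ,
      Summable fun n : ℤ => ‖(f.comp (ContinuousMap.addRight n)).restrict K‖)
    (φ : C(X, ℝ)) (K : Compacts X) :
    Summable fun n : ℤ => ‖((f.comp (ContinuousMap.addRight n)).comp φ).restrict K‖ :=
  (hf (K.map φ φ.continuous)).of_nonneg_of_le (fun _ => norm_nonneg _) fun _ =>
    norm_restrict_comp_le _ φ K

theorem SchwartzMap.summable_norm_restrict_comp_addRight {E : Type*} [NormedAddCommGroup E]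
    [NormedSpace ℝ E] (f : SchwartzMap ℝ E) (K : Compacts ℝ) :
    Summable fun n : ℤ => ‖((f : C(ℝ, E)).comp (ContinuousMap.addRight n)).restrict K‖ :=
  summable_of_isBigO (Real.summable_abs_int_rpow one_lt_two)
    ((isBigO_norm_restrict_cocompact _ two_pos (f.isBigO_cocompact_rpow (-2)) K).comp_tendsto
      Int.tendsto_coe_cofinite)

theorem hasSum_intervalIntegral_mul_of_summable_norm {ι κ A : Type*} [Countable ι] [Countable κ]
    [NormedRing A] [NormedAlgebra ℝ A] [CompleteSpace A] {F : ι → C(ℝ, A)} {G : κ → C(ℝ, A)}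
    {a b : ℝ} (hF : Summable fun i => ‖(F i).restrict (⟨uIcc a b, isCompact_uIcc⟩ : Compacts ℝ)‖)
    (hG : Summable fun j => ‖(G j).restrict (⟨uIcc a b, isCompact_uIcc⟩ : Compacts ℝ)‖) :
    HasSum (fun p : ι × κ => ∫ y in a..b, F p.1 y * G p.2 y)
      (∫ y in a..b, (∑' i, F i y) * ∑' j, G j y) := by
  have hFG : Summable fun p : ι × κ =>
      ‖(F p.1 * G p.2).restrict (⟨uIcc a b, isCompact_uIcc⟩ : Compacts ℝ)‖ :=
    (hF.mul_of_nonneg hG (fun _ => norm_nonneg _) fun _ => norm_nonneg _).of_nonneg_of_le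
      (fun _ => norm_nonneg _) fun p => norm_mul_le ((F p.1).restrict _) ((G p.2).restrict _)
  have hprod : EqOn (fun y => (∑' i, F i y) * ∑' j, G j y)
      (fun y => ∑' p : ι × κ, F p.1 y * G p.2 y) (uIcc a b) := fun y hy =>
    tsum_mul_tsum_of_summable_norm (summable_norm_apply_of_summable_norm_restrict hF hy)
      (summable_norm_apply_of_summable_norm_restrict hG hy)
  rw [intervalIntegral.integral_congr hprod]
  exact intervalIntegral.hasSum_intervalIntegral_of_summable_norm hFG

theorem wrap_convolution_of_summable_norm_restrict {f g : C(ℝ, ℂ)}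
    (hf : ∀ K : Compacts ℝ,
      Summable fun n : ℤ => ‖(f.comp (ContinuousMap.addRight n)).restrict K‖)
    (hg : ∀ K : Compacts ℝ,
      Summable fun n : ℤ => ‖(g.comp (ContinuousMap.addRight n)).restrict K‖) (x : ℝ) :
    wrap (fun z : ℝ => ∫ y : ℝ, f (z - y) * g y) x
      = ∫ y in (0 : ℝ)..1, wrap f (x - y) * wrap g y := by
  have hint (z : ℝ) : Integrable fun y => f (z - y) * g y :=
    (Real.integrable_of_summable_norm_Icc (hg ⟨Icc 0 1, isCompact_Icc⟩)).bdd_mul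
      (by fun_prop)
      (ae_of_all _ fun _ => norm_apply_le_tsum_norm_restrict_Icc (hf ⟨Icc 0 1, isCompact_Icc⟩) _)
  have hprod := hasSum_intervalIntegral_mul_of_summable_norm (a := 0) (b := 1)
    (summable_norm_restrict_comp_addRight_comp hf ⟨(x - ·), by fun_prop⟩ _) (hg _)
  let e : ℤ × ℤ ≃ ℤ × ℤ :=
    { toFun := fun p => (p.1 - p.2, p.2)
      invFun := fun p => (p.1 + p.2, p.2)
      left_inv := fun _ => by simp
      right_inv := fun _ => by simp }
  refine ((e.hasSum_iff.mpr hprod).prod_fiberwise fun n => ?_).tsum_eq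
  refine (hint (x + n)).hasSum_intervalIntegral_comp_add_int.congr_fun fun m =>
    intervalIntegral.integral_congr fun y _ => ?_
  have harg : x - y + (n - m) = x + n - (y + m) := by ring
  simp [e, harg]

/-- The wrapping map is a convolution homomorphism (abelian case `G = ℝ/ℤ`, `j ≡ 1`):
the periodization of a Euclidean convolution of Schwartz functions equals the circle
convolution of the periodizations. -/
theorem wrap_convolution (f g : SchwartzMap ℝ ℂ) (x : ℝ) :
    wrap (fun z : ℝ => ∫ y : ℝ, f (z - y) * g y) x
      = ∫ y in (0 : ℝ)..1, wrap (⇑f) (x - y) * wrap (⇑g) y :=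
  wrap_convolution_of_summable_norm_restrict f.summable_norm_restrict_comp_addRight
    g.summable_norm_restrict_comp_addRight x
end

section
/- The wrapped heat kernel solves the heat equation on the circle: the function Q(t,x) = (2πt)^{−1/2} Σ_{n∈ℤ} e^{−(x+n)²/(2t)}, defined for t > 0 and x ∈ ℝ, satisfies ∂_t Q(t,x) = (1/2) ∂²_x Q(t,x) for all t > 0 and x ∈ ℝ. -/
/-!
Poisson summation, in the form of the functional equation of the Jacobi theta function,
identifies `Q_t(x)` with `θ(x, 2πit) = Σₙ e^{-2π²n²t} e^{2πinx}`. Every term of the theta series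
satisfies `∂²_z = 4πi ∂_τ`, and the series may be differentiated termwise because it converges
locally uniformly together with its derivatives; hence so does `θ`. Along `z = x`, `τ = 2πit` the
chain rule turns this into `∂_t Q = ½ ∂²_x Q`.
-/

open Real MeasureTheory

/-- The wrapped heat kernel on the circle `ℝ/ℤ`, viewed as a `1`-periodic function on
`ℝ`: `Q_t(x) = (2πt)^{-1/2} Σ_{n∈ℤ} e^{-(x+n)²/(2t)}`. -/
noncomputable def wrappedHeatKernel (t x : ℝ) : ℝ :=
  (2 * π * t) ^ (-(1 : ℝ) / 2) * ∑' n : ℤ, Real.exp (-(x + n) ^ 2 / (2 * t))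

open Complex

lemma hasDerivAt_jacobiTheta₂_snd (z : ℂ) {τ : ℂ} (hτ : 0 < im τ) :
    HasDerivAt (jacobiTheta₂ z) (∑' n : ℤ, π * I * n ^ 2 * jacobiTheta₂_term n z τ) τ := by
  have hsum := (ContinuousLinearMap.apply ℂ ℂ ((0, 1) : ℂ × ℂ)).hasSum
    (hasSum_jacobiTheta₂_term_fderiv z hτ)
  refine ((hasFDerivAt_jacobiTheta₂ z hτ).comp τ
    (hasFDerivAt_prodMk_right z τ)).hasDerivAt.congr_deriv ?_
  refine hsum.tsum_eq.symm.trans (tsum_congr fun n => ?_)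
  simp only [jacobiTheta₂_term_fderiv, jacobiTheta₂_term, ContinuousLinearMap.apply_apply,
    add_apply, smul_apply, ContinuousLinearMap.coe_fst', ContinuousLinearMap.coe_snd', smul_eq_mul,
    mul_zero, mul_one, zero_add]
  ring

lemma hasDerivAt_jacobiTheta₂'_fst (z : ℂ) {τ : ℂ} (hτ : 0 < im τ) :
    HasDerivAt (jacobiTheta₂' · τ)
      (∑' n : ℤ, (2 * π * I * n) ^ 2 * jacobiTheta₂_term n z τ) z := by
  obtain ⟨T, hT, hτT⟩ := exists_between hτ
  obtain ⟨S, hzS⟩ := exists_gt |im z|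
  have hterm (n : ℤ) (w : ℂ) : HasDerivAt (jacobiTheta₂'_term n · τ)
      ((2 * π * I * n) ^ 2 * jacobiTheta₂_term n w τ) w := by
    have := (((hasDerivAt_id w).const_mul (2 * π * I * n)).add_const
      (π * I * n ^ 2 * τ)).cexp.const_mul (2 * π * I * n)
    simp only [id, mul_one] at this
    exact this.congr_deriv (by simp only [jacobiTheta₂_term]; ring)
  have hbound (n : ℤ) (w : ℂ) (hw : w ∈ {u : ℂ | |im u| < S}) :
      ‖(2 * π * I * n) ^ 2 * jacobiTheta₂_term n w τ‖ ≤
        (2 * π) ^ 2 * (|n| ^ 2 * rexp (-π * (T * n ^ 2 - 2 * S * |n|))) := by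
    have hnorm : ‖(2 * π * I * n : ℂ) ^ 2‖ = (2 * π) ^ 2 * ((|n| : ℤ) : ℝ) ^ 2 := by
      simp [mul_pow]
    rw [norm_mul, hnorm, mul_assoc]
    gcongr
    exact norm_jacobiTheta₂_term_le hT hw.le hτT.le n
  have hopen : IsOpen {u : ℂ | |im u| < S} :=
    (_root_.continuous_abs.comp continuous_im).isOpen_preimage _ isOpen_Iio
  have hconvex : Convex ℝ {u : ℂ | |im u| < S} := by
    simpa only [abs_lt] using! (convex_halfSpace_im_gt (-S)).inter (convex_halfSpace_im_lt S)
  exact hasDerivAt_tsum_of_isPreconnected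
    ((summable_pow_mul_jacobiTheta₂_term_bound S hT 2).mul_left ((2 * π) ^ 2))
    hopen hconvex.isPreconnected (fun n w _ => hterm n w) hbound hzS
    ((summable_jacobiTheta₂'_term_iff z τ).mpr hτ) hzS

lemma jacobiTheta₂_heat_equation (z : ℂ) {τ : ℂ} (hτ : 0 < im τ) :
    HasDerivAt (jacobiTheta₂' · τ) (4 * π * I * deriv (jacobiTheta₂ z) τ) z := by
  rw [(hasDerivAt_jacobiTheta₂_snd z hτ).deriv, ← tsum_mul_left]
  exact (hasDerivAt_jacobiTheta₂'_fst z hτ).congr_deriv (tsum_congr fun n => by ring)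

lemma ofReal_wrappedHeatKernel {t : ℝ} (ht : 0 < t) (x : ℝ) :
    (wrappedHeatKernel t x : ℂ) = jacobiTheta₂ x (2 * π * I * t) := by
  have hroot : 1 / (-I * (2 * π * I * t)) ^ (1 / 2 : ℂ) = ((2 * π * t) ^ (-(1 : ℝ) / 2) : ℝ) := by
    have : -I * (2 * π * I * t) = ((2 * π * t : ℝ) : ℂ) := by
      push_cast; linear_combination (-2 * π * t : ℂ) * I_sq
    rw [this, ← ofReal_one, ← ofReal_ofNat, ← ofReal_div, ← ofReal_cpow (by positivity),
      ← ofReal_div, neg_div, Real.rpow_neg (by positivity), one_div]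
  have hterm (n : ℤ) : cexp (-π * I * (-x) ^ 2 / (2 * π * I * t)) *
      jacobiTheta₂_term n (-x / (2 * π * I * t)) (-1 / (2 * π * I * t)) =
      (Real.exp (-(x + n) ^ 2 / (2 * t)) : ℂ) := by
    rw [jacobiTheta₂_term, ← Complex.exp_add, ofReal_exp]
    congr 1
    push_cast
    field_simp
    ring
  -- evaluating at `-x` makes the transformed terms `e^{-(x+n)²/2t}` rather than `e^{-(x-n)²/2t}`
  rw [← jacobiTheta₂_neg_left, jacobiTheta₂_functional_equation, hroot, mul_assoc, jacobiTheta₂,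
    ← tsum_mul_left, tsum_congr hterm, wrappedHeatKernel, ofReal_mul, ofReal_tsum]

lemma wrappedHeatKernel_eq_re_jacobiTheta₂ {t : ℝ} (ht : 0 < t) :
    wrappedHeatKernel t = fun x : ℝ => (jacobiTheta₂ x (2 * π * I * t)).re :=
  funext fun x => by rw [← ofReal_wrappedHeatKernel ht, ofReal_re]

lemma im_two_pi_I_mul_pos {t : ℝ} (ht : 0 < t) : 0 < (2 * π * I * t : ℂ).im := by
  simpa using by positivity

lemma hasDerivAt_wrappedHeatKernel_fst {t : ℝ} (ht : 0 < t) (x : ℝ) :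
    HasDerivAt (fun s : ℝ => wrappedHeatKernel s x)
      (2 * π * I * deriv (jacobiTheta₂ x) (2 * π * I * t)).re t := by
  have hθ : HasDerivAt (fun w : ℂ => jacobiTheta₂ x (2 * π * I * w))
      (2 * π * I * deriv (jacobiTheta₂ x) (2 * π * I * t)) t :=
    ((differentiableAt_jacobiTheta₂_snd (x : ℂ) (im_two_pi_I_mul_pos ht)).hasDerivAt.comp
      (t : ℂ) ((hasDerivAt_id (t : ℂ)).const_mul (2 * π * I))).congr_deriv (by ring)
  refine hθ.real_of_complex.congr_of_eventuallyEq ?_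
  filter_upwards [Ioi_mem_nhds ht] with s hs
  rw [wrappedHeatKernel_eq_re_jacobiTheta₂ hs]

lemma deriv_wrappedHeatKernel {t : ℝ} (ht : 0 < t) :
    deriv (wrappedHeatKernel t) = fun x : ℝ => (jacobiTheta₂' x (2 * π * I * t)).re := by
  rw [wrappedHeatKernel_eq_re_jacobiTheta₂ ht]
  exact funext fun x =>
    (hasDerivAt_jacobiTheta₂_fst (x : ℂ) (im_two_pi_I_mul_pos ht)).real_of_complex.deriv

/-- The wrapped heat kernel solves the heat equation on the circle:
`∂_t Q(t,x) = (1/2) ∂²_x Q(t,x)` for all `t > 0` and `x ∈ ℝ`. -/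
theorem wrappedHeatKernel_solves_heat_equation (t : ℝ) (ht : 0 < t) (x : ℝ) :
    deriv (fun τ : ℝ => wrappedHeatKernel τ x) t
      = (1 / 2) * deriv (deriv (wrappedHeatKernel t)) x := by
  rw [(hasDerivAt_wrappedHeatKernel_fst ht x).deriv, deriv_wrappedHeatKernel ht,
    (jacobiTheta₂_heat_equation x (im_two_pi_I_mul_pos ht)).real_of_complex.deriv,
    show 4 * π * I * deriv (jacobiTheta₂ x) (2 * π * I * t)
      = (2 : ℝ) * (2 * π * I * deriv (jacobiTheta₂ x) (2 * π * I * t)) by push_cast; ring,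
    re_ofReal_mul]
  ring
end
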